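/- Let u, ρ be smooth, rapidly decaying solutions of the system u_t + u u_x + ∂_x G*(u² + (1/2)u_x² - Au + μ u_{xx} + (1/2)ρ²) = 0, ρ_t + u ρ_x = -u_x ρ, where G(x) = (1/2)e^{-|x|} so that (1 - ∂_x²)⁻¹ f = G * f. Then H(t) = ∫_ℝ (u³ + u u_x² - A u² - μ u_x² + u ρ²) dx is constant in time. -/

import Mathlib

open MeasureTheory Filter Set Real

noncomputable def greenG (x : ℝ) : ℝ := (1 / 2) * Real.exp (-|x|)
noncomputable def greenConv (f : ℝ → ℝ) (x : ℝ) : ℝ := ∫ y : ℝ, greenG (x - y) * f y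

namespace R2CH

noncomputable def I1 (f : ℝ → ℝ) (x : ℝ) : ℝ := ∫ y in Set.Iic x, Real.exp y * f y
noncomputable def I2 (f : ℝ → ℝ) (x : ℝ) : ℝ := ∫ y in Set.Ioi x, Real.exp (-y) * f y
noncomputable def P1 (f : ℝ → ℝ) (x : ℝ) : ℝ :=
  (1/2) * (Real.exp x * I2 f x - Real.exp (-x) * I1 f x)

variable {f : ℝ → ℝ} {C : ℝ}

lemma intOn_I1 (hc : Continuous f) (hC : ∀ x, |f x| ≤ C) (x : ℝ) :
    IntegrableOn (fun y => Real.exp y * f y) (Set.Iic x) := by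
  refine Integrable.mono' ((integrableOn_exp_Iic x).mul_const C)
    (Real.continuous_exp.mul hc).aestronglyMeasurable.restrict ?_
  filter_upwards with y
  have h0 := (Real.exp_pos y).le
  have := hC y
  simp only [norm_mul, Real.norm_eq_abs, abs_of_pos (Real.exp_pos y)]
  nlinarith [abs_nonneg (f y)]

lemma intOn_I2 (hc : Continuous f) (hC : ∀ x, |f x| ≤ C) (x : ℝ) :
    IntegrableOn (fun y => Real.exp (-y) * f y) (Set.Ioi x) := by
  have hexp : IntegrableOn (fun y : ℝ => Real.exp (-y)) (Set.Ioi x) := by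
    simpa using exp_neg_integrableOn_Ioi x (b := 1) one_pos
  refine Integrable.mono' (hexp.mul_const C)
    (((Real.continuous_exp.comp continuous_neg).mul hc)).aestronglyMeasurable.restrict ?_
  filter_upwards with y
  have h0 := (Real.exp_pos (-y)).le
  have := hC y
  simp only [norm_mul, Real.norm_eq_abs, abs_of_pos (Real.exp_pos (-y))]
  nlinarith [abs_nonneg (f y)]

end R2CH

namespace R2CH
variable {f : ℝ → ℝ} {C : ℝ}

lemma integrable_kernel (hc : Continuous f) (hC : ∀ x, |f x| ≤ C) (x : ℝ) :
    Integrable (fun y => greenG (x - y) * f y) := by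
  have habs : Integrable (fun y : ℝ => Real.exp (-|y|)) := by
    have h1 : IntegrableOn (fun y : ℝ => Real.exp (-|y|)) (Set.Iic 0) := by
      refine (IntegrableOn.congr_fun (integrableOn_exp_Iic 0) ?_ measurableSet_Iic)
      intro y hy; simp [abs_of_nonpos (mem_Iic.mp hy)]
    have h2 : IntegrableOn (fun y : ℝ => Real.exp (-|y|)) (Set.Ioi 0) := by
      have hbase : IntegrableOn (fun y : ℝ => Real.exp (-y)) (Set.Ioi 0) := by
        simpa using exp_neg_integrableOn_Ioi 0 (b := 1) one_pos
      refine (IntegrableOn.congr_fun hbase ?_ measurableSet_Ioi)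
      intro y hy; simp [abs_of_pos (mem_Ioi.mp hy)]
    have := h1.union h2
    rwa [Set.Iic_union_Ioi, integrableOn_univ] at this
  have hker : Integrable (fun y : ℝ => Real.exp (-|x - y|)) := by
    simpa using habs.comp_sub_left x
  have hcont : Continuous (fun y => greenG (x - y) * f y) := by
    unfold greenG
    exact ((continuous_const.mul (Real.continuous_exp.comp
      (continuous_abs.comp (continuous_const.sub continuous_id)).neg)).mul hc)
  refine Integrable.mono' ((hker.const_mul (1/2)).mul_const C)
    hcont.aestronglyMeasurable ?_
  filter_upwards with y
  have h0 := (Real.exp_pos (-|x - y|)).le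
  have := hC y
  simp only [greenG, norm_mul, Real.norm_eq_abs, abs_of_pos (Real.exp_pos (-|x - y|))]
  rw [abs_of_nonneg (by norm_num : (0:ℝ) ≤ 1/2)]
  nlinarith [abs_nonneg (f y)]

lemma greenConv_eq (hc : Continuous f) (hC : ∀ x, |f x| ≤ C) (x : ℝ) :
    greenConv f x = (1/2) * (Real.exp (-x) * I1 f x + Real.exp x * I2 f x) := by
  have hint := integrable_kernel hc hC x
  have hsplit : greenConv f x
      = (∫ y in Set.Iic x, greenG (x - y) * f y) + ∫ y in Set.Ioi x, greenG (x - y) * f y := by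
    rw [greenConv, ← setIntegral_univ, ← Set.Iic_union_Ioi (a := x),
      setIntegral_union (Set.Iic_disjoint_Ioi le_rfl) measurableSet_Ioi
        hint.integrableOn hint.integrableOn]
  have h1 : (∫ y in Set.Iic x, greenG (x - y) * f y)
      = (1/2) * (Real.exp (-x) * I1 f x) := by
    rw [show (1/2) * (Real.exp (-x) * I1 f x) = ∫ y in Set.Iic x,
        (1/2) * (Real.exp (-x) * (Real.exp y * f y)) by
      rw [integral_const_mul, integral_const_mul]; rfl]
    refine setIntegral_congr_fun measurableSet_Iic fun y hy => ?_
    have h : |x - y| = x - y := abs_of_nonneg (by linarith [mem_Iic.mp hy])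
    simp only [greenG, h]
    rw [show -(x - y) = -x + y by ring, Real.exp_add]; ring
  have h2 : (∫ y in Set.Ioi x, greenG (x - y) * f y)
      = (1/2) * (Real.exp x * I2 f x) := by
    rw [show (1/2) * (Real.exp x * I2 f x) = ∫ y in Set.Ioi x,
        (1/2) * (Real.exp x * (Real.exp (-y) * f y)) by
      rw [integral_const_mul, integral_const_mul]; rfl]
    refine setIntegral_congr_fun measurableSet_Ioi fun y hy => ?_
    have h : |x - y| = -(x - y) := abs_of_nonpos (by linarith [mem_Ioi.mp hy])
    simp only [greenG, h]
    rw [show - -(x - y) = x + -y by ring, Real.exp_add]; ring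
  rw [hsplit, h1, h2]; ring

end R2CH

namespace R2CH
variable {f : ℝ → ℝ} {C : ℝ}

lemma hasDerivAt_I1 (hc : Continuous f) (hC : ∀ x, |f x| ≤ C) (x : ℝ) :
    HasDerivAt (I1 f) (Real.exp x * f x) x := by
  have hfc : Continuous fun y => Real.exp y * f y := Real.continuous_exp.mul hc
  have key : I1 f = fun z => (∫ y in (0:ℝ)..z, Real.exp y * f y) + I1 f 0 := by
    funext z
    have := intervalIntegral.integral_Iic_sub_Iic (intOn_I1 hc hC 0) (intOn_I1 hc hC z)
    unfold I1; linarith [this]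
  rw [key]
  exact (intervalIntegral.integral_hasDerivAt_right (hfc.intervalIntegrable 0 x)
    (hfc.stronglyMeasurableAtFilter _ _) hfc.continuousAt).add_const _

lemma hasDerivAt_I2 (hc : Continuous f) (hC : ∀ x, |f x| ≤ C) (x : ℝ) :
    HasDerivAt (I2 f) (-(Real.exp (-x) * f x)) x := by
  have hfc : Continuous fun y => Real.exp (-y) * f y :=
    (Real.continuous_exp.comp continuous_neg).mul hc
  have hIoi : ∀ z : ℝ, IntegrableOn (fun y => Real.exp (-y) * f y) (Set.Ioi z) :=
    intOn_I2 hc hC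
  have hsub : ∀ a b : ℝ, a ≤ b →
      I2 f a - I2 f b = ∫ y in a..b, Real.exp (-y) * f y := by
    intro a b hab
    rw [intervalIntegral.integral_of_le hab]
    have hsplit := setIntegral_union (Set.Ioc_disjoint_Ioi le_rfl) measurableSet_Ioi
      ((hIoi a).mono_set Set.Ioc_subset_Ioi_self) (hIoi b)
    rw [Set.Ioc_union_Ioi_eq_Ioi hab] at hsplit
    unfold I2; linarith [hsplit]
  have key : I2 f = fun z => I2 f 0 - ∫ y in (0:ℝ)..z, Real.exp (-y) * f y := by
    funext z
    rcases le_total 0 z with h | h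
    · have := hsub 0 z h; linarith
    · have := hsub z 0 h
      rw [intervalIntegral.integral_symm] at this
      linarith
  rw [key]
  have hftc : HasDerivAt (fun z => ∫ y in (0:ℝ)..z, Real.exp (-y) * f y)
      (Real.exp (-x) * f x) x :=
    intervalIntegral.integral_hasDerivAt_right (hfc.intervalIntegrable 0 x)
      (hfc.stronglyMeasurableAtFilter _ _) hfc.continuousAt
  have := (hasDerivAt_const x (I2 f 0)).sub hftc
  rw [zero_sub] at this
  exact this

lemma hasDerivAt_greenConv (hc : Continuous f) (hC : ∀ x, |f x| ≤ C) (x : ℝ) :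
    HasDerivAt (greenConv f) (P1 f x) x := by
  have key : greenConv f = fun z =>
      (1/2) * (Real.exp (-z) * I1 f z + Real.exp z * I2 f z) :=
    funext fun z => greenConv_eq hc hC z
  rw [key]
  have h1 : HasDerivAt (fun z => Real.exp (-z) * I1 f z)
      (-Real.exp (-x) * I1 f x + Real.exp (-x) * (Real.exp x * f x)) x := by
    have he : HasDerivAt (fun z : ℝ => Real.exp (-z)) (-Real.exp (-x)) x := by
      simpa using ((hasDerivAt_id x).neg.exp)
    exact he.mul (hasDerivAt_I1 hc hC x)
  have h2 : HasDerivAt (fun z => Real.exp z * I2 f z)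
      (Real.exp x * I2 f x + Real.exp x * (-(Real.exp (-x) * f x))) x :=
    (Real.hasDerivAt_exp x).mul (hasDerivAt_I2 hc hC x)
  have := ((h1.add h2).const_mul (1/2))
  refine this.congr_deriv ?_
  unfold P1
  have hee : Real.exp (-x) * Real.exp x = 1 := by
    rw [← Real.exp_add]; simp
  have hee' : Real.exp x * Real.exp (-x) = 1 := by
    rw [← Real.exp_add]; simp
  have e1 : Real.exp x * -(Real.exp (-x) * f x) = -f x := by
    have : Real.exp x * -(Real.exp (-x) * f x)
        = -((Real.exp x * Real.exp (-x)) * f x) := by ring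
    rw [this, hee']; ring
  have e2 : Real.exp (-x) * (Real.exp x * f x) = f x := by
    have : Real.exp (-x) * (Real.exp x * f x)
        = (Real.exp (-x) * Real.exp x) * f x := by ring
    rw [this, hee]; ring
  rw [e1, e2]; ring

lemma hasDerivAt_P1 (hc : Continuous f) (hC : ∀ x, |f x| ≤ C) (x : ℝ) :
    HasDerivAt (P1 f) (greenConv f x - f x) x := by
  have h1 : HasDerivAt (fun z => Real.exp (-z) * I1 f z)
      (-Real.exp (-x) * I1 f x + Real.exp (-x) * (Real.exp x * f x)) x := by
    have he : HasDerivAt (fun z : ℝ => Real.exp (-z)) (-Real.exp (-x)) x := by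
      simpa using ((hasDerivAt_id x).neg.exp)
    exact he.mul (hasDerivAt_I1 hc hC x)
  have h2 : HasDerivAt (fun z => Real.exp z * I2 f z)
      (Real.exp x * I2 f x + Real.exp x * (-(Real.exp (-x) * f x))) x :=
    (Real.hasDerivAt_exp x).mul (hasDerivAt_I2 hc hC x)
  have := ((h2.sub h1).const_mul (1/2))
  have hgoal : HasDerivAt (P1 f) ((1/2) * ((Real.exp x * I2 f x
      + Real.exp x * (-(Real.exp (-x) * f x)))
      - (-Real.exp (-x) * I1 f x + Real.exp (-x) * (Real.exp x * f x)))) x := this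
  convert hgoal using 1
  rw [greenConv_eq hc hC x]
  have hee : Real.exp (-x) * Real.exp x = 1 := by
    rw [← Real.exp_add]; simp
  have hee' : Real.exp x * Real.exp (-x) = 1 := by
    rw [← Real.exp_add]; simp
  have e1 : Real.exp x * -(Real.exp (-x) * f x) = -f x := by
    have : Real.exp x * -(Real.exp (-x) * f x)
        = -((Real.exp x * Real.exp (-x)) * f x) := by ring
    rw [this, hee']; ring
  have e2 : Real.exp (-x) * (Real.exp x * f x) = f x := by
    have : Real.exp (-x) * (Real.exp x * f x)
        = (Real.exp (-x) * Real.exp x) * f x := by ring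
    rw [this, hee]; ring
  rw [e1, e2]; ring

end R2CH

namespace R2CH
variable {f : ℝ → ℝ} {C : ℝ}

lemma tendsto_exp_neg_I1_atBot (hc : Continuous f) (hC : ∀ x, |f x| ≤ C)
    (h0 : Tendsto f atBot (nhds 0)) :
    Tendsto (fun x => Real.exp (-x) * I1 f x) atBot (nhds 0) := by
  rw [NormedAddCommGroup.tendsto_nhds_zero]
  intro ε hε
  have hε2 : (0:ℝ) < ε/2 := by linarith
  obtain ⟨M, hM⟩ := eventually_atBot.mp
    ((NormedAddCommGroup.tendsto_nhds_zero.mp h0) (ε/2) hε2)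
  filter_upwards [eventually_le_atBot M] with x hxM
  have hb : ‖I1 f x‖ ≤ (ε/2) * Real.exp x := by
    have h1 : ‖I1 f x‖ ≤ ∫ y in Set.Iic x, ‖Real.exp y * f y‖ :=
      norm_integral_le_integral_norm _
    have h2 : (∫ y in Set.Iic x, ‖Real.exp y * f y‖)
        ≤ ∫ y in Set.Iic x, Real.exp y * (ε/2) := by
      refine setIntegral_mono_on (intOn_I1 hc hC x).norm
        ((integrableOn_exp_Iic x).mul_const _) measurableSet_Iic fun y hy => ?_
      have : ‖f y‖ ≤ ε/2 := (hM y (le_trans (mem_Iic.mp hy) hxM)).le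
      rw [norm_mul, Real.norm_eq_abs, abs_of_pos (Real.exp_pos y)]
      have := (Real.exp_pos y).le
      nlinarith [norm_nonneg (f y)]
    have h3 : (∫ y in Set.Iic x, Real.exp y * (ε/2)) = (ε/2) * Real.exp x := by
      rw [integral_mul_const, integral_exp_Iic]; ring
    linarith
  have hexp : Real.exp (-x) * Real.exp x = 1 := by rw [← Real.exp_add]; simp
  have : ‖Real.exp (-x) * I1 f x‖ = Real.exp (-x) * ‖I1 f x‖ := by
    rw [norm_mul, Real.norm_eq_abs, abs_of_pos (Real.exp_pos _)]
  rw [this]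
  calc Real.exp (-x) * ‖I1 f x‖ ≤ Real.exp (-x) * ((ε/2) * Real.exp x) := by
        exact mul_le_mul_of_nonneg_left hb (Real.exp_pos _).le
    _ = ε/2 := by rw [show Real.exp (-x) * ((ε/2) * Real.exp x)
          = (Real.exp (-x) * Real.exp x) * (ε/2) by ring, hexp]; ring
    _ < ε := by linarith

lemma tendsto_exp_neg_I1_atTop (hc : Continuous f) (hC : ∀ x, |f x| ≤ C)
    (h0 : Tendsto f atTop (nhds 0)) :
    Tendsto (fun x => Real.exp (-x) * I1 f x) atTop (nhds 0) := by
  rw [NormedAddCommGroup.tendsto_nhds_zero]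
  intro ε hε
  have hε4 : (0:ℝ) < ε/4 := by linarith
  obtain ⟨M, hM⟩ := eventually_atTop.mp
    ((NormedAddCommGroup.tendsto_nhds_zero.mp h0) (ε/4) hε4)
  have htail : Tendsto (fun x => Real.exp (-x) * ‖I1 f M‖) atTop (nhds 0) := by
    simpa using Real.tendsto_exp_neg_atTop_nhds_zero.mul_const ‖I1 f M‖
  have htail' : ∀ᶠ x in atTop, Real.exp (-x) * ‖I1 f M‖ < ε/2 := by
    have := (NormedAddCommGroup.tendsto_nhds_zero.mp htail) (ε/2) (by linarith)
    filter_upwards [this] with x hx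
    have h0' : (0:ℝ) ≤ Real.exp (-x) * ‖I1 f M‖ :=
      mul_nonneg (Real.exp_pos _).le (norm_nonneg _)
    rwa [Real.norm_eq_abs, abs_of_nonneg h0'] at hx
  filter_upwards [eventually_ge_atTop M, htail'] with x hxM htx
  have hsplit : I1 f x = I1 f M + ∫ y in Set.Ioc M x, Real.exp y * f y := by
    have h := setIntegral_union (Set.Iic_disjoint_Ioc le_rfl) measurableSet_Ioc
      (intOn_I1 hc hC M) ((intOn_I1 hc hC x).mono_set Set.Ioc_subset_Iic_self)
    rw [Set.Iic_union_Ioc_eq_Iic hxM] at h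
    exact h
  have hb : ‖∫ y in Set.Ioc M x, Real.exp y * f y‖ ≤ (ε/4) * Real.exp x := by
    have h1 : ‖∫ y in Set.Ioc M x, Real.exp y * f y‖
        ≤ ∫ y in Set.Ioc M x, ‖Real.exp y * f y‖ := norm_integral_le_integral_norm _
    have h2 : (∫ y in Set.Ioc M x, ‖Real.exp y * f y‖)
        ≤ ∫ y in Set.Ioc M x, Real.exp y * (ε/4) := by
      refine setIntegral_mono_on ((intOn_I1 hc hC x).mono_set
          Set.Ioc_subset_Iic_self).norm
        (IntegrableOn.mono_set ((integrableOn_exp_Iic x).mul_const _)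
          Set.Ioc_subset_Iic_self)
        measurableSet_Ioc fun y hy => ?_
      have : ‖f y‖ ≤ ε/4 := (hM y (le_of_lt hy.1)).le
      rw [norm_mul, Real.norm_eq_abs, abs_of_pos (Real.exp_pos y)]
      have := (Real.exp_pos y).le
      nlinarith [norm_nonneg (f y)]
    have h3 : (∫ y in Set.Ioc M x, Real.exp y * (ε/4))
        ≤ ∫ y in Set.Iic x, Real.exp y * (ε/4) := by
      refine setIntegral_mono_set ((integrableOn_exp_Iic x).mul_const _)
        ?_ (HasSubset.Subset.eventuallyLE Set.Ioc_subset_Iic_self)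
      filter_upwards with y
      exact mul_nonneg (Real.exp_pos y).le (by linarith)
    have h4 : (∫ y in Set.Iic x, Real.exp y * (ε/4)) = (ε/4) * Real.exp x := by
      rw [integral_mul_const, integral_exp_Iic]; ring
    linarith
  have hexp : Real.exp (-x) * Real.exp x = 1 := by rw [← Real.exp_add]; simp
  have hnorm : ‖Real.exp (-x) * I1 f x‖ = Real.exp (-x) * ‖I1 f x‖ := by
    rw [norm_mul, Real.norm_eq_abs, abs_of_pos (Real.exp_pos _)]
  rw [hnorm, hsplit]
  calc Real.exp (-x) * ‖I1 f M + ∫ y in Set.Ioc M x, Real.exp y * f y‖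
      ≤ Real.exp (-x) * (‖I1 f M‖ + (ε/4) * Real.exp x) := by
        refine mul_le_mul_of_nonneg_left ?_ (Real.exp_pos _).le
        exact le_trans (norm_add_le _ _) (by linarith)
    _ = Real.exp (-x) * ‖I1 f M‖ + (Real.exp (-x) * Real.exp x) * (ε/4) := by ring
    _ < ε/2 + 1 * (ε/4) := by rw [hexp]; linarith
    _ < ε := by linarith

end R2CH

namespace R2CH
variable {f : ℝ → ℝ} {C : ℝ}

lemma I2_eq_I1_neg (x : ℝ) : I2 f x = I1 (fun z => f (-z)) (-x) := by
  unfold I1 I2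
  rw [← integral_comp_neg_Ioi]
  refine setIntegral_congr_fun measurableSet_Ioi fun y _ => ?_
  simp

lemma tendsto_exp_I2_atTop (hc : Continuous f) (hC : ∀ x, |f x| ≤ C)
    (h0 : Tendsto f atTop (nhds 0)) :
    Tendsto (fun x => Real.exp x * I2 f x) atTop (nhds 0) := by
  have hgc : Continuous fun z => f (-z) := hc.comp continuous_neg
  have hgC : ∀ z, |(fun z => f (-z)) z| ≤ C := fun z => hC (-z)
  have hg0 : Tendsto (fun z => f (-z)) atBot (nhds 0) :=
    h0.comp tendsto_neg_atBot_atTop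
  have h := (tendsto_exp_neg_I1_atBot hgc hgC hg0).comp
    (tendsto_neg_atTop_atBot (G := ℝ))
  refine h.congr fun x => ?_
  simp only [Function.comp]
  rw [neg_neg, ← I2_eq_I1_neg]

lemma tendsto_exp_I2_atBot (hc : Continuous f) (hC : ∀ x, |f x| ≤ C)
    (h0 : Tendsto f atBot (nhds 0)) :
    Tendsto (fun x => Real.exp x * I2 f x) atBot (nhds 0) := by
  have hgc : Continuous fun z => f (-z) := hc.comp continuous_neg
  have hgC : ∀ z, |(fun z => f (-z)) z| ≤ C := fun z => hC (-z)
  have hg0 : Tendsto (fun z => f (-z)) atTop (nhds 0) :=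
    h0.comp tendsto_neg_atTop_atBot
  have h := (tendsto_exp_neg_I1_atTop hgc hgC hg0).comp
    (tendsto_neg_atBot_atTop (G := ℝ))
  refine h.congr fun x => ?_
  simp only [Function.comp]
  rw [neg_neg, ← I2_eq_I1_neg]

lemma tendsto_greenConv_atTop (hc : Continuous f) (hC : ∀ x, |f x| ≤ C)
    (h0 : Tendsto f atTop (nhds 0)) :
    Tendsto (greenConv f) atTop (nhds 0) := by
  have key : greenConv f = fun z =>
      (1/2) * (Real.exp (-z) * I1 f z + Real.exp z * I2 f z) :=
    funext fun z => greenConv_eq hc hC z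
  rw [key]
  simpa using ((tendsto_exp_neg_I1_atTop hc hC h0).add
    (tendsto_exp_I2_atTop hc hC h0)).const_mul (1/2:ℝ)

lemma tendsto_greenConv_atBot (hc : Continuous f) (hC : ∀ x, |f x| ≤ C)
    (h0 : Tendsto f atBot (nhds 0)) :
    Tendsto (greenConv f) atBot (nhds 0) := by
  have key : greenConv f = fun z =>
      (1/2) * (Real.exp (-z) * I1 f z + Real.exp z * I2 f z) :=
    funext fun z => greenConv_eq hc hC z
  rw [key]
  simpa using ((tendsto_exp_neg_I1_atBot hc hC h0).add
    (tendsto_exp_I2_atBot hc hC h0)).const_mul (1/2:ℝ)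

lemma tendsto_P1_atTop (hc : Continuous f) (hC : ∀ x, |f x| ≤ C)
    (h0 : Tendsto f atTop (nhds 0)) :
    Tendsto (P1 f) atTop (nhds 0) := by
  unfold P1
  simpa using ((tendsto_exp_I2_atTop hc hC h0).sub
    (tendsto_exp_neg_I1_atTop hc hC h0)).const_mul (1/2:ℝ)

lemma tendsto_P1_atBot (hc : Continuous f) (hC : ∀ x, |f x| ≤ C)
    (h0 : Tendsto f atBot (nhds 0)) :
    Tendsto (P1 f) atBot (nhds 0) := by
  unfold P1
  simpa using ((tendsto_exp_I2_atBot hc hC h0).sub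
    (tendsto_exp_neg_I1_atBot hc hC h0)).const_mul (1/2:ℝ)

/-- A continuous real function with zero limits at `±∞` is bounded. -/
lemma exists_bound_of_tendsto {f : ℝ → ℝ} (hc : Continuous f)
    (ht : Tendsto f atTop (nhds 0)) (hb : Tendsto f atBot (nhds 0)) :
    ∃ C, ∀ x, |f x| ≤ C := by
  obtain ⟨a, ha⟩ := eventually_atTop.mp
    ((NormedAddCommGroup.tendsto_nhds_zero.mp ht) 1 one_pos)
  obtain ⟨b, hbb⟩ := eventually_atBot.mp
    ((NormedAddCommGroup.tendsto_nhds_zero.mp hb) 1 one_pos)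
  obtain ⟨C0, hC0⟩ := (isCompact_Icc (a := b) (b := a)).exists_bound_of_continuousOn
    hc.continuousOn
  refine ⟨max C0 1, fun x => ?_⟩
  rcases le_or_gt x b with h | h
  · exact le_trans (le_of_lt (by simpa [Real.norm_eq_abs] using hbb x h)) (le_max_right _ _)
  rcases le_or_gt a x with h' | h'
  · exact le_trans (le_of_lt (by simpa [Real.norm_eq_abs] using ha x h')) (le_max_right _ _)
  · exact le_trans (by simpa [Real.norm_eq_abs] using hC0 x ⟨h.le, h'.le⟩) (le_max_left _ _)

/-- FTC on the real line: integral of an integrable derivative of a function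
vanishing at `±∞` is zero. -/
lemma integral_deriv_eq_zero' {Φ Φ' : ℝ → ℝ} (hd : ∀ x, HasDerivAt Φ (Φ' x) x)
    (hi : Integrable Φ') (ht : Tendsto Φ atTop (nhds 0))
    (hb : Tendsto Φ atBot (nhds 0)) : (∫ x, Φ' x) = 0 := by
  have h1 : Tendsto (fun n : ℕ => ∫ x in (-(n:ℝ))..(n:ℝ), Φ' x) atTop
      (nhds (∫ x, Φ' x)) :=
    intervalIntegral_tendsto_integral hi
      (tendsto_neg_atTop_atBot.comp tendsto_natCast_atTop_atTop)
      tendsto_natCast_atTop_atTop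
  have heq : ∀ n : ℕ, (∫ x in (-(n:ℝ))..(n:ℝ), Φ' x) = Φ n - Φ (-(n:ℝ)) := fun n =>
    intervalIntegral.integral_eq_sub_of_hasDerivAt (fun x _ => hd x)
      hi.intervalIntegrable
  have h2 : Tendsto (fun n : ℕ => Φ (n:ℝ) - Φ (-(n:ℝ))) atTop (nhds (0 - 0)) :=
    (ht.comp tendsto_natCast_atTop_atTop).sub
      (hb.comp (tendsto_neg_atTop_atBot.comp tendsto_natCast_atTop_atTop))
  rw [sub_zero] at h2
  exact tendsto_nhds_unique ((h1.congr heq)) h2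

end R2CH

namespace R2CH
variable {f : ℝ × ℝ → ℝ}

lemma hasDerivAt_slice1 (hf : ContDiff ℝ (⊤ : ℕ∞) f) (x t : ℝ) :
    HasDerivAt (fun y => f (y, t)) (fderiv ℝ f (x, t) (1, 0)) x := by
  have h := (hf.differentiable (by simp) (x, t)).hasFDerivAt
  have hγ : HasDerivAt (fun y : ℝ => (y, t)) ((1:ℝ), (0:ℝ)) x :=
    HasDerivAt.prodMk (hasDerivAt_id x) (hasDerivAt_const x t)
  exact h.comp_hasDerivAt x hγ

lemma hasDerivAt_slice2 (hf : ContDiff ℝ (⊤ : ℕ∞) f) (x t : ℝ) :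
    HasDerivAt (fun s => f (x, s)) (fderiv ℝ f (x, t) (0, 1)) t := by
  have h := (hf.differentiable (by simp) (x, t)).hasFDerivAt
  have hγ : HasDerivAt (fun s : ℝ => (x, s)) ((0:ℝ), (1:ℝ)) t :=
    HasDerivAt.prodMk (hasDerivAt_const t x) (hasDerivAt_id t)
  exact h.comp_hasDerivAt t hγ

lemma contDiff_pd (hf : ContDiff ℝ (⊤ : ℕ∞) f) (v : ℝ × ℝ) :
    ContDiff ℝ (⊤ : ℕ∞) (fun p => fderiv ℝ f p v) :=
  (hf.fderiv_right (by simp)).clm_apply contDiff_const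

lemma fderiv_pd_apply (hf : ContDiff ℝ (⊤ : ℕ∞) f) (q v w : ℝ × ℝ) :
    fderiv ℝ (fun p => fderiv ℝ f p v) q w = fderiv ℝ (fderiv ℝ f) q w v := by
  have hdiff : DifferentiableAt ℝ (fderiv ℝ f) q :=
    ((hf.fderiv_right (m := (⊤ : ℕ∞)) (by simp)).differentiable (by simp)) q
  have h := hdiff.hasFDerivAt.clm_apply (hasFDerivAt_const v q)
  rw [h.fderiv]
  simp

lemma deriv_comm (hf : ContDiff ℝ (⊤ : ℕ∞) f) (x t : ℝ) :
    deriv (fun s => fderiv ℝ f (x, s) ((1:ℝ), (0:ℝ))) t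
      = deriv (fun y => fderiv ℝ f (y, t) ((0:ℝ), (1:ℝ))) x := by
  have h1 := (hasDerivAt_slice2 (contDiff_pd hf (1, 0)) x t).deriv
  have h2 := (hasDerivAt_slice1 (contDiff_pd hf (0, 1)) x t).deriv
  rw [h1, h2, fderiv_pd_apply hf _ _ _, fderiv_pd_apply hf _ _ _]
  exact (hf.contDiffAt.isSymmSndFDerivAt (by rw [minSmoothness_of_isRCLikeNormedField]; exact WithTop.coe_le_coe.mpr le_top)).eq _ _

end R2CH

open MeasureTheory Filter R2CH

theorem r2ch_H_conservation (T A μ : ℝ) (hT : 0 < T) (u ρ : ℝ → ℝ → ℝ)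
    (hu_smooth : ContDiff ℝ (⊤ : ℕ∞) (fun p : ℝ × ℝ => u p.1 p.2))
    (hρ_smooth : ContDiff ℝ (⊤ : ℕ∞) (fun p : ℝ × ℝ => ρ p.1 p.2))
    (hpde_u : ∀ x t, t ∈ Set.Icc (0 : ℝ) T →
      deriv (fun s => u x s) t + u x t * deriv (fun y => u y t) x
        + deriv (greenConv (fun y =>
            (u y t) ^ 2 + (1 / 2) * (deriv (fun z => u z t) y) ^ 2 - A * u y t
              + μ * deriv (fun z => deriv (fun w => u w t) z) y
              + (1 / 2) * (ρ y t) ^ 2)) x = 0)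
    (hpde_ρ : ∀ x t, t ∈ Set.Icc (0 : ℝ) T →
      deriv (fun s => ρ x s) t + u x t * deriv (fun y => ρ y t) x
        = -(deriv (fun y => u y t) x) * ρ x t)
    (hdecay_u : ∀ t ∈ Set.Icc (0 : ℝ) T, ∀ k ≤ 3,
      Tendsto (fun x => iteratedDeriv k (fun y => u y t) x) atTop (nhds 0)
      ∧ Tendsto (fun x => iteratedDeriv k (fun y => u y t) x) atBot (nhds 0))
    (hdecay_ρ : ∀ t ∈ Set.Icc (0 : ℝ) T, ∀ k ≤ 1,
      Tendsto (fun x => iteratedDeriv k (fun y => ρ y t) x) atTop (nhds 0)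
      ∧ Tendsto (fun x => iteratedDeriv k (fun y => ρ y t) x) atBot (nhds 0))
    (hint : ∀ t ∈ Set.Icc (0 : ℝ) T, Integrable (fun x =>
      (u x t) ^ 3 + u x t * (deriv (fun y => u y t) x) ^ 2 - A * (u x t) ^ 2
        - μ * (deriv (fun y => u y t) x) ^ 2 + u x t * (ρ x t) ^ 2))
    (hint' : ∀ t ∈ Set.Icc (0 : ℝ) T, Integrable (fun x =>
      deriv (fun s => (u x s) ^ 3 + u x s * (deriv (fun y => u y s) x) ^ 2
        - A * (u x s) ^ 2 - μ * (deriv (fun y => u y s) x) ^ 2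
        + u x s * (ρ x s) ^ 2) t))
    (hDUI : ∀ t ∈ Set.Icc (0 : ℝ) T,
      HasDerivAt (fun s => ∫ x : ℝ,
          ((u x s) ^ 3 + u x s * (deriv (fun y => u y s) x) ^ 2 - A * (u x s) ^ 2
            - μ * (deriv (fun y => u y s) x) ^ 2 + u x s * (ρ x s) ^ 2))
        (∫ x : ℝ,
          deriv (fun s => (u x s) ^ 3 + u x s * (deriv (fun y => u y s) x) ^ 2
            - A * (u x s) ^ 2 - μ * (deriv (fun y => u y s) x) ^ 2
            + u x s * (ρ x s) ^ 2) t) t) :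
    ∀ t₁ ∈ Set.Icc (0 : ℝ) T, ∀ t₂ ∈ Set.Icc (0 : ℝ) T,
      (∫ x : ℝ, ((u x t₁) ^ 3 + u x t₁ * (deriv (fun y => u y t₁) x) ^ 2
          - A * (u x t₁) ^ 2 - μ * (deriv (fun y => u y t₁) x) ^ 2
          + u x t₁ * (ρ x t₁) ^ 2))
      = ∫ x : ℝ, ((u x t₂) ^ 3 + u x t₂ * (deriv (fun y => u y t₂) x) ^ 2
          - A * (u x t₂) ^ 2 - μ * (deriv (fun y => u y t₂) x) ^ 2
          + u x t₂ * (ρ x t₂) ^ 2) := by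
  have key : ∀ t ∈ Set.Icc (0 : ℝ) T,
      (∫ x : ℝ, deriv (fun s => (u x s) ^ 3 + u x s * (deriv (fun y => u y s) x) ^ 2
        - A * (u x s) ^ 2 - μ * (deriv (fun y => u y s) x) ^ 2
        + u x s * (ρ x s) ^ 2) t) = 0 := by
    intro t ht
    -- two-variable smooth functions
    set fu : ℝ × ℝ → ℝ := fun p => u p.1 p.2 with hfu
    set fρ : ℝ × ℝ → ℝ := fun p => ρ p.1 p.2 with hfρ
    have hVf : ContDiff ℝ (⊤ : ℕ∞) (fun p : ℝ × ℝ => fderiv ℝ fu p (1, 0)) :=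
      contDiff_pd hu_smooth _
    -- slice derivative identities
    have hV : ∀ (y s : ℝ), deriv (fun z => u z s) y = fderiv ℝ fu (y, s) (1, 0) :=
      fun y s => (hasDerivAt_slice1 hu_smooth y s).deriv
    have hRxs : ∀ (y s : ℝ), deriv (fun z => ρ z s) y = fderiv ℝ fρ (y, s) (1, 0) :=
      fun y s => (hasDerivAt_slice1 hρ_smooth y s).deriv
    have hW : ∀ (y s : ℝ), deriv (fun z => deriv (fun w => u w s) z) y
        = fderiv ℝ (fun p : ℝ × ℝ => fderiv ℝ fu p (1, 0)) (y, s) (1, 0) := by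
      intro y s
      have hfun : (fun z => deriv (fun w => u w s) z)
          = fun z => fderiv ℝ fu (z, s) (1, 0) := funext fun z => hV z s
      rw [hfun]
      exact (hasDerivAt_slice1 hVf y s).deriv
    -- decay facts
    have hU0 := hdecay_u t ht 0 (by norm_num)
    rw [show (fun x => iteratedDeriv 0 (fun y => u y t) x) = fun x => u x t by
      rw [iteratedDeriv_zero]] at hU0
    have hV0 := hdecay_u t ht 1 (by norm_num)
    rw [show (fun x => iteratedDeriv 1 (fun y => u y t) x)
        = fun x => fderiv ℝ fu (x, t) (1, 0) by
      rw [iteratedDeriv_one]; exact funext fun x => hV x t] at hV0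
    have hW0 := hdecay_u t ht 2 (by norm_num)
    rw [show (fun x => iteratedDeriv 2 (fun y => u y t) x)
        = fun x => fderiv ℝ (fun p : ℝ × ℝ => fderiv ℝ fu p (1, 0)) (x, t) (1, 0) by
      rw [show (2 : ℕ) = 1 + 1 from rfl, iteratedDeriv_succ, iteratedDeriv_one]
      exact funext fun x => hW x t] at hW0
    have hR0 := hdecay_ρ t ht 0 (by norm_num)
    rw [show (fun x => iteratedDeriv 0 (fun y => ρ y t) x) = fun x => ρ x t by
      rw [iteratedDeriv_zero]] at hR0
    have hRx0 := hdecay_ρ t ht 1 (by norm_num)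
    rw [show (fun x => iteratedDeriv 1 (fun y => ρ y t) x)
        = fun x => fderiv ℝ fρ (x, t) (1, 0) by
      rw [iteratedDeriv_one]; exact funext fun x => hRxs x t] at hRx0
    -- the nonlocal source term
    set F : ℝ → ℝ := fun y =>
        (u y t) ^ 2 + (1 / 2) * (deriv (fun z => u z t) y) ^ 2 - A * u y t
          + μ * deriv (fun z => deriv (fun w => u w t) z) y
          + (1 / 2) * (ρ y t) ^ 2 with hFdef
    have hFalt : ∀ y, F y = (u y t) ^ 2 + (1 / 2) * (fderiv ℝ fu (y, t) (1, 0)) ^ 2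
        - A * u y t + μ * (fderiv ℝ (fun p : ℝ × ℝ => fderiv ℝ fu p (1, 0)) (y, t) (1, 0))
        + (1 / 2) * (ρ y t) ^ 2 := by
      intro y
      rw [hFdef]
      simp only
      rw [hV y t, hW y t]
    have hcu : Continuous (fun y => u y t) :=
      hu_smooth.continuous.comp (continuous_id.prodMk continuous_const)
    have hcρ : Continuous (fun y => ρ y t) :=
      hρ_smooth.continuous.comp (continuous_id.prodMk continuous_const)
    have hcV : Continuous (fun y => fderiv ℝ fu (y, t) (1, 0)) :=
      hVf.continuous.comp (continuous_id.prodMk continuous_const)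
    have hcW : Continuous
        (fun y => fderiv ℝ (fun p : ℝ × ℝ => fderiv ℝ fu p (1, 0)) (y, t) (1, 0)) :=
      (contDiff_pd hVf _).continuous.comp (continuous_id.prodMk continuous_const)
    have hFeq : F = fun y => (u y t) ^ 2 + (1 / 2) * (fderiv ℝ fu (y, t) (1, 0)) ^ 2
        - A * u y t + μ * (fderiv ℝ (fun p : ℝ × ℝ => fderiv ℝ fu p (1, 0)) (y, t) (1, 0))
        + (1 / 2) * (ρ y t) ^ 2 := funext hFalt
    have hFc : Continuous F := by
      rw [hFeq]
      exact ((((hcu.pow 2).add (continuous_const.mul (hcV.pow 2))).sub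
        (continuous_const.mul hcu)).add (continuous_const.mul hcW)).add
        (continuous_const.mul (hcρ.pow 2))
    have hFtop : Tendsto F atTop (nhds 0) := by
      rw [hFeq]
      have h := ((((hU0.1.pow 2).add ((hV0.1.pow 2).const_mul (1/2 : ℝ))).sub
        (hU0.1.const_mul A)).add (hW0.1.const_mul μ)).add
        ((hR0.1.pow 2).const_mul (1/2 : ℝ))
      simpa using h
    have hFbot : Tendsto F atBot (nhds 0) := by
      rw [hFeq]
      have h := ((((hU0.2.pow 2).add ((hV0.2.pow 2).const_mul (1/2 : ℝ))).sub
        (hU0.2.const_mul A)).add (hW0.2.const_mul μ)).add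
        ((hR0.2.pow 2).const_mul (1/2 : ℝ))
      simpa using h
    obtain ⟨Cf, hCf⟩ := exists_bound_of_tendsto hFc hFtop hFbot
    -- Green kernel facts
    have hPder : ∀ y, HasDerivAt (greenConv F) (P1 F y) y :=
      fun y => hasDerivAt_greenConv hFc hCf y
    have hQder : ∀ y, HasDerivAt (P1 F) (greenConv F y - F y) y :=
      fun y => hasDerivAt_P1 hFc hCf y
    have hPtop := tendsto_greenConv_atTop hFc hCf hFtop
    have hPbot := tendsto_greenConv_atBot hFc hCf hFbot
    have hQtop := tendsto_P1_atTop hFc hCf hFtop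
    have hQbot := tendsto_P1_atBot hFc hCf hFbot
    -- PDE for u, rewritten
    have hUt : ∀ y, fderiv ℝ fu (y, t) (0, 1)
        = -(u y t * fderiv ℝ fu (y, t) (1, 0) + P1 F y) := by
      intro y
      have h := hpde_u y t ht
      rw [← hFdef] at h
      have e1 : deriv (fun s => u y s) t = fderiv ℝ fu (y, t) (0, 1) :=
        (hasDerivAt_slice2 hu_smooth y t).deriv
      rw [e1, (hPder y).deriv, hV y t] at h
      linarith
    -- PDE for ρ, rewritten
    have hRt : ∀ y, fderiv ℝ fρ (y, t) (0, 1)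
        = -(u y t * fderiv ℝ fρ (y, t) (1, 0) + fderiv ℝ fu (y, t) (1, 0) * ρ y t) := by
      intro y
      have h := hpde_ρ y t ht
      have e1 : deriv (fun s => ρ y s) t = fderiv ℝ fρ (y, t) (0, 1) :=
        (hasDerivAt_slice2 hρ_smooth y t).deriv
      rw [e1, hV y t, hRxs y t] at h
      linarith
    -- mixed second derivative via Clairaut and the PDE
    have hMT : ∀ x, fderiv ℝ (fun p : ℝ × ℝ => fderiv ℝ fu p (1, 0)) (x, t) (0, 1)
        = -(fderiv ℝ fu (x, t) (1, 0) * fderiv ℝ fu (x, t) (1, 0)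
            + u x t * fderiv ℝ (fun p : ℝ × ℝ => fderiv ℝ fu p (1, 0)) (x, t) (1, 0)
            + (greenConv F x - F x)) := by
      intro x
      have e0 : deriv (fun s => fderiv ℝ fu (x, s) (1, 0)) t
          = fderiv ℝ (fun p : ℝ × ℝ => fderiv ℝ fu p (1, 0)) (x, t) (0, 1) :=
        (hasDerivAt_slice2 hVf x t).deriv
      rw [← e0, deriv_comm hu_smooth x t]
      have hfun : (fun y => fderiv ℝ fu (y, t) ((0 : ℝ), (1 : ℝ)))
          = fun y => -(u y t * fderiv ℝ fu (y, t) (1, 0) + P1 F y) := funext hUt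
      rw [hfun]
      have h1 : HasDerivAt (fun y => u y t) (fderiv ℝ fu (x, t) (1, 0)) x :=
        hasDerivAt_slice1 hu_smooth x t
      have h2 : HasDerivAt (fun y => fderiv ℝ fu (y, t) (1, 0))
          (fderiv ℝ (fun p : ℝ × ℝ => fderiv ℝ fu p (1, 0)) (x, t) (1, 0)) x :=
        hasDerivAt_slice1 hVf x t
      exact (((h1.mul h2).add (hQder x)).neg).deriv
    -- pointwise: the time-derivative of the density is the space-derivative of Φ
    set Φ : ℝ → ℝ := fun y =>
        -((u y t) ^ 2 * (fderiv ℝ fu (y, t) (1, 0)) ^ 2)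
        + 2 * μ * (u y t * (fderiv ℝ fu (y, t) (1, 0)) ^ 2)
        + 2 * μ * (fderiv ℝ fu (y, t) (1, 0) * P1 F y)
        - (greenConv F y) ^ 2
        + (P1 F y) ^ 2
        - (u y t) ^ 2 * greenConv F y
        - (u y t) ^ 2 * (ρ y t) ^ 2
        - (u y t) ^ 4 / 4 with hΦdef
    have hΦder : ∀ x, HasDerivAt Φ
        (deriv (fun s => (u x s) ^ 3 + u x s * (deriv (fun y => u y s) x) ^ 2
          - A * (u x s) ^ 2 - μ * (deriv (fun y => u y s) x) ^ 2
          + u x s * (ρ x s) ^ 2) t) x := by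
      intro x
      -- time derivative of the density
      have hrw : (fun s => (u x s) ^ 3 + u x s * (deriv (fun y => u y s) x) ^ 2
            - A * (u x s) ^ 2 - μ * (deriv (fun y => u y s) x) ^ 2 + u x s * (ρ x s) ^ 2)
          = fun s => (u x s) ^ 3 + u x s * (fderiv ℝ fu (x, s) (1, 0)) ^ 2
            - A * (u x s) ^ 2 - μ * (fderiv ℝ fu (x, s) (1, 0)) ^ 2
            + u x s * (ρ x s) ^ 2 := by
        funext s; rw [hV x s]
      rw [hrw]
      have h1 : HasDerivAt (fun s => u x s) (fderiv ℝ fu (x, t) (0, 1)) t :=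
        hasDerivAt_slice2 hu_smooth x t
      have h2 : HasDerivAt (fun s => fderiv ℝ fu (x, s) (1, 0))
          (fderiv ℝ (fun p : ℝ × ℝ => fderiv ℝ fu p (1, 0)) (x, t) (0, 1)) t :=
        hasDerivAt_slice2 hVf x t
      have h3 : HasDerivAt (fun s => ρ x s) (fderiv ℝ fρ (x, t) (0, 1)) t :=
        hasDerivAt_slice2 hρ_smooth x t
      have hE := ((((h1.pow 3).add (h1.mul (h2.pow 2))).sub
        ((h1.pow 2).const_mul A)).sub ((h2.pow 2).const_mul μ)).add
        (h1.mul (h3.pow 2))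
      have hE' : HasDerivAt (fun s => (u x s) ^ 3 + u x s * (fderiv ℝ fu (x, s) (1, 0)) ^ 2
          - A * (u x s) ^ 2 - μ * (fderiv ℝ fu (x, s) (1, 0)) ^ 2 + u x s * (ρ x s) ^ 2) _ t := hE
      rw [hE'.deriv]
      -- space derivative of Φ
      have g1 : HasDerivAt (fun y => u y t) (fderiv ℝ fu (x, t) (1, 0)) x :=
        hasDerivAt_slice1 hu_smooth x t
      have g2 : HasDerivAt (fun y => fderiv ℝ fu (y, t) (1, 0))
          (fderiv ℝ (fun p : ℝ × ℝ => fderiv ℝ fu p (1, 0)) (x, t) (1, 0)) x :=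
        hasDerivAt_slice1 hVf x t
      have g3 : HasDerivAt (fun y => ρ y t) (fderiv ℝ fρ (x, t) (1, 0)) x :=
        hasDerivAt_slice1 hρ_smooth x t
      have hΦ := (((((((((g1.pow 2).mul (g2.pow 2)).neg).add
        ((g1.mul (g2.pow 2)).const_mul (2 * μ))).add
        ((g2.mul (hQder x)).const_mul (2 * μ))).sub
        ((hPder x).pow 2)).add
        ((hQder x).pow 2)).sub
        ((g1.pow 2).mul (hPder x))).sub
        ((g1.pow 2).mul (g3.pow 2))).sub
        ((g1.pow 4).div_const 4)
      have hΦ' : HasDerivAt Φ _ x := hΦ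
      convert hΦ' using 1
      rw [hUt x, hMT x, hRt x, hFalt x]
      simp only [Pi.pow_apply, Pi.mul_apply]
      ring
    have hΦtop : Tendsto Φ atTop (nhds 0) := by
      rw [hΦdef]
      have h := (((((((((hU0.1.pow 2).mul (hV0.1.pow 2)).neg).add
        (((hU0.1.mul (hV0.1.pow 2))).const_mul (2 * μ))).add
        (((hV0.1.mul hQtop)).const_mul (2 * μ))).sub
        (hPtop.pow 2)).add
        (hQtop.pow 2)).sub
        ((hU0.1.pow 2).mul hPtop)).sub
        ((hU0.1.pow 2).mul (hR0.1.pow 2))).sub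
        ((hU0.1.pow 4).div_const 4)
      simpa using h
    have hΦbot : Tendsto Φ atBot (nhds 0) := by
      rw [hΦdef]
      have h := (((((((((hU0.2.pow 2).mul (hV0.2.pow 2)).neg).add
        (((hU0.2.mul (hV0.2.pow 2))).const_mul (2 * μ))).add
        (((hV0.2.mul hQbot)).const_mul (2 * μ))).sub
        (hPbot.pow 2)).add
        (hQbot.pow 2)).sub
        ((hU0.2.pow 2).mul hPbot)).sub
        ((hU0.2.pow 2).mul (hR0.2.pow 2))).sub
        ((hU0.2.pow 4).div_const 4)
      simpa using h
    exact integral_deriv_eq_zero' hΦder (hint' t ht) hΦtop hΦbot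
  -- conclude from vanishing derivative
  intro t₁ ht₁ t₂ ht₂
  set H : ℝ → ℝ := fun s => ∫ x : ℝ,
      ((u x s) ^ 3 + u x s * (deriv (fun y => u y s) x) ^ 2 - A * (u x s) ^ 2
        - μ * (deriv (fun y => u y s) x) ^ 2 + u x s * (ρ x s) ^ 2) with hH
  have hH0 : ∀ t ∈ Set.Icc (0 : ℝ) T, HasDerivAt H 0 t := by
    intro t ht
    have := hDUI t ht
    rwa [key t ht] at this
  have hconst := constant_of_has_deriv_right_zero (f := H) (a := 0) (b := T)
    (fun t ht => (hH0 t ht).continuousAt.continuousWithinAt)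
    (fun t ht => (hH0 t (Set.Ico_subset_Icc_self ht)).hasDerivWithinAt)
  have e1 : H t₁ = H 0 := hconst t₁ ht₁
  have e2 : H t₂ = H 0 := hconst t₂ ht₂
  show H t₁ = H t₂
  rw [e1, e2]
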